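/- Let h = φ∘g where φ : ℝ^m → ℝ∪{+∞} is proper lower semicontinuous and g : X → ℝ^m is parabolically semidifferentiable at x̄ ∈ dom h. Suppose there exist κ > 0 and ε > 0 with dist(x, g^{-1}(dom φ)) ≤ κ·dist(g(x), dom φ) for all x with ‖x−x̄‖ ≤ ε. Then for any w ∈ T_{dom h}(x̄) and any z ∈ X: z ∈ T²_{dom h}(x̄,w) if and only if g''(x̄;w,z) ∈ T²_{dom φ}(g(x̄), dg(x̄)(w)). If in addition dom φ is parabolically derivable at g(x̄) for dg(x̄)(w), then dom h is parabolically derivable at x̄ for w. -/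

import Mathlib

open Filter Topology Metric Set Pointwise
open scoped RealInnerProductSpace Classical

noncomputable section

namespace Paper

variable {X : Type*} [NormedAddCommGroup X] [NormedSpace ℝ X]
variable {Y : Type*} [NormedAddCommGroup Y] [NormedSpace ℝ Y]

/-- The effective domain of an extended-real-valued function. -/
def edom (h : X → EReal) : Set X := {x | h x ≠ ⊤}

/-- A function with values in `ℝ ∪ {+∞}` is proper if it is nowhere `⊥` and
finite somewhere. -/
def Proper (h : X → EReal) : Prop := (∀ x, h x ≠ ⊥) ∧ ∃ x, h x ≠ ⊤

/-- The indicator function `δ_C` of a set `C`. -/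
def ind (C : Set X) : X → EReal := fun x => if x ∈ C then (0 : EReal) else ⊤

/-- The tangent cone `T_S(x)`. -/
def tcone (S : Set X) (x : X) : Set X :=
  {w | ∃ τ : ℕ → ℝ, (∀ k, 0 < τ k) ∧ Tendsto τ atTop (𝓝 0) ∧
    Tendsto (fun k => infDist (x + τ k • w) S / τ k) atTop (𝓝 0)}

/-- The inner tangent cone `T^i_S(x)`. -/
def itcone (S : Set X) (x : X) : Set X :=
  {w | Tendsto (fun τ : ℝ => infDist (x + τ • w) S / τ) (𝓝[>] (0 : ℝ)) (𝓝 0)}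

/-- The second-order tangent set `T²_S(x,w)`. -/
def tcone2 (S : Set X) (x w : X) : Set X :=
  {z | ∃ τ : ℕ → ℝ, (∀ k, 0 < τ k) ∧ Tendsto τ atTop (𝓝 0) ∧
    Tendsto (fun k => infDist (x + τ k • w + ((τ k) ^ 2 / 2) • z) S / (τ k) ^ 2) atTop (𝓝 0)}

/-- The inner second-order tangent set `T^{i,2}_S(x,w)`. -/
def itcone2 (S : Set X) (x w : X) : Set X :=
  {z | Tendsto (fun τ : ℝ => infDist (x + τ • w + (τ ^ 2 / 2) • z) S / τ ^ 2)
    (𝓝[>] (0 : ℝ)) (𝓝 0)}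

/-- `S` is parabolically derivable at `x` for `w`. -/
def ParabolicallyDerivable (S : Set X) (x w : X) : Prop :=
  itcone2 S x w = tcone2 S x w ∧ (tcone2 S x w).Nonempty

/-- The subderivative `dh(x)(w)`. -/
def subderiv (h : X → EReal) (x w : X) : EReal :=
  liminf (fun p : ℝ × X => (h (x + p.1 • p.2) - h x) * (((p.1)⁻¹ : ℝ) : EReal))
    ((𝓝[>] (0 : ℝ)) ×ˢ 𝓝 w)

/-- The second-order difference quotient `Δ²_τ h(x)(w')` (without a vector `v`),
with the convention that it equals `⊤` whenever `h(x+τw')` and `dh(x)(w')` are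
simultaneously `+∞` or simultaneously `−∞`. -/
def quot2 (h : X → EReal) (x : X) (τ : ℝ) (w' : X) : EReal :=
  if (h (x + τ • w') = ⊤ ∧ subderiv h x w' = ⊤) ∨ (h (x + τ • w') = ⊥ ∧ subderiv h x w' = ⊥)
  then ⊤
  else (h (x + τ • w') - h x - (τ : EReal) * subderiv h x w') * (((2 / τ ^ 2) : ℝ) : EReal)

/-- The second subderivative `d²h(x)(w)` (without a vector `v`). -/
def subderiv2 (h : X → EReal) (x w : X) : EReal :=
  liminf (fun p : ℝ × X => quot2 h x p.1 p.2) ((𝓝[>] (0 : ℝ)) ×ˢ 𝓝 w)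

/-- The parabolic subderivative `d²h(x)(w|z)`. -/
def psubderiv (h : X → EReal) (x w z : X) : EReal :=
  liminf (fun p : ℝ × X =>
      (h (x + p.1 • w + (p.1 ^ 2 / 2) • p.2) - h x - (p.1 : EReal) * subderiv h x w)
        * (((2 / p.1 ^ 2) : ℝ) : EReal))
    ((𝓝[>] (0 : ℝ)) ×ˢ 𝓝 z)

/-- `h` is parabolically epi-differentiable at `x` for `w`. -/
def ParaEpiDiffAt (h : X → EReal) (x w : X) : Prop :=
  (∃ z, psubderiv h x w z ≠ ⊤) ∧
  ∀ z : X, ∀ τ : ℕ → ℝ, (∀ k, 0 < τ k) → Tendsto τ atTop (𝓝 (0 : ℝ)) →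
    ∃ zs : ℕ → X, Tendsto zs atTop (𝓝 z) ∧
      Tendsto (fun k =>
          (h (x + τ k • w + ((τ k) ^ 2 / 2) • zs k) - h x
              - ((τ k : ℝ) : EReal) * subderiv h x w)
            * (((2 / (τ k) ^ 2) : ℝ) : EReal))
        atTop (𝓝 (psubderiv h x w z))

/-- A polyhedral (convex) set: a finite intersection of closed half-spaces. -/
def IsPolyhedral (C : Set X) : Prop :=
  ∃ (k : ℕ) (a : Fin k → (X →L[ℝ] ℝ)) (b : Fin k → ℝ), C = {y | ∀ i, a i y ≤ b i}

/-- `g` is (Fréchet) twice differentiable on `U`. -/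
def TwiceDiffOn (g : X → Y) (U : Set X) : Prop :=
  (∀ y ∈ U, DifferentiableAt ℝ g y) ∧ ∀ y ∈ U, DifferentiableAt ℝ (fderiv ℝ g) y

/-- `ψ` is piecewise twice differentiable (PWTD) with pieces `Ω i` and twice
differentiable selections `sel i`. -/
structure IsPWTD (ψ : X → EReal) {s : ℕ} (Ω : Fin s → Set X) (sel : Fin s → X → ℝ) : Prop where
  dom_nonempty : (edom ψ).Nonempty
  dom_eq : edom ψ = ⋃ i, Ω i
  polyhedral : ∀ i, IsPolyhedral (Ω i)
  smooth : ∀ i, ∃ U : Set X, IsOpen U ∧ Ω i ⊆ U ∧ TwiceDiffOn (sel i) U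
  agrees : ∀ i, ∀ y ∈ Ω i, ψ y = ((sel i y : ℝ) : EReal)

/-- The active index set `J_y`. -/
def Jset {s : ℕ} (Ω : Fin s → Set X) (y : X) : Set (Fin s) := {i | y ∈ Ω i}

/-- The active index set `J_{y,w}`. -/
def Jset2 {s : ℕ} (Ω : Fin s → Set X) (y w : X) : Set (Fin s) :=
  {i | y ∈ Ω i ∧ w ∈ tcone (Ω i) y}

/-- `⟨w, ∇²g(y)w⟩`, the Hessian quadratic form of `g` at `y`. -/
def hess (g : X → ℝ) (y w : X) : ℝ := fderiv ℝ (fderiv ℝ g) y w w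

/-- `ψ` is locally Lipschitz (strictly continuous) relative to its domain. -/
def LipRelDom (ψ : X → EReal) : Prop :=
  ∀ y ∈ edom ψ, ∃ K ε : ℝ, 0 < ε ∧
    ∀ y₁ ∈ edom ψ ∩ ball y ε, ∀ y₂ ∈ edom ψ ∩ ball y ε,
      |(ψ y₁).toReal - (ψ y₂).toReal| ≤ K * ‖y₁ - y₂‖

/-- `g` has semiderivative `d` at `x` for `w`. -/
def HasSemideriv (g : X → Y) (x w : X) (d : Y) : Prop :=
  Tendsto (fun p : ℝ × X => (p.1)⁻¹ • (g (x + p.1 • p.2) - g x))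
    ((𝓝[>] (0 : ℝ)) ×ˢ 𝓝 w) (𝓝 d)

/-- `g` has parabolic semiderivative `d2` at `x` for `w` (with semiderivative `d`)
with respect to `z`. -/
def HasParaSemideriv (g : X → Y) (x w : X) (d : Y) (z : X) (d2 : Y) : Prop :=
  Tendsto (fun p : ℝ × X =>
      (2 / p.1 ^ 2) • (g (x + p.1 • w + (p.1 ^ 2 / 2) • p.2) - g x - p.1 • d))
    ((𝓝[>] (0 : ℝ)) ×ˢ 𝓝 z) (𝓝 d2)

/-- `g` is parabolically semidifferentiable at `x`. -/
def ParaSemidiffAt (g : X → Y) (x : X) : Prop :=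
  ∀ w, ∃ d, HasSemideriv g x w d ∧ ∀ z, ∃ d2, HasParaSemideriv g x w d z d2

/-- The metric subregularity qualification condition for the system `F(x) ∈ D` at `xb`. -/
def MSQC (F : X → Y) (D : Set Y) (xb : X) : Prop :=
  ∃ κ : ℝ, 0 < κ ∧ ∃ ε : ℝ, 0 < ε ∧
    ∀ x : X, ‖x - xb‖ ≤ ε → infDist x (F ⁻¹' D) ≤ κ * infDist (F x) D

/-- A piecewise linear function. -/
def IsPWL (g : X → EReal) : Prop :=
  ∃ (l : ℕ) (D : Fin l → Set X), edom g = ⋃ i, D i ∧ (∀ i, IsPolyhedral (D i)) ∧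
    ∀ i, ∃ (a : X →L[ℝ] ℝ) (c : ℝ), ∀ y ∈ D i, g y = ((a y + c : ℝ) : EReal)

/-- A piecewise linear-quadratic function. -/
def IsPWLQ (g : X → EReal) : Prop :=
  ∃ (l : ℕ) (D : Fin l → Set X), edom g = ⋃ i, D i ∧ (∀ i, IsPolyhedral (D i)) ∧
    ∀ i, ∃ (Q : X →L[ℝ] (X →L[ℝ] ℝ)) (a : X →L[ℝ] ℝ) (c : ℝ),
      ∀ y ∈ D i, g y = ((Q y y + a y + c : ℝ) : EReal)

/-- A function which is, piecewise on finitely many polyhedral sets covering its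
domain, a positively homogeneous continuous function. -/
def IsPiecewisePosHom (g : X → EReal) : Prop :=
  ∃ (l : ℕ) (D : Fin l → Set X), edom g = ⋃ i, D i ∧ (∀ i, IsPolyhedral (D i)) ∧
    ∀ i, ∃ hfun : X → ℝ, Continuous hfun ∧
      (∀ t : ℝ, 0 < t → ∀ x, hfun (t • x) = t * hfun x) ∧
      ∀ y ∈ D i, g y = ((hfun y : ℝ) : EReal)

/-- Convexity for extended-real-valued functions. -/
def ERealConvexOn (g : X → EReal) : Prop :=
  ∀ x y : X, ∀ t : ℝ, 0 ≤ t → t ≤ 1 →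
    g ((1 - t) • x + t • y) ≤ ((1 - t : ℝ) : EReal) * g x + ((t : ℝ) : EReal) * g y

section InnerSpace

variable {E : Type*} [NormedAddCommGroup E] [InnerProductSpace ℝ E]

/-- The second-order difference quotient `Δ²_τ h(x|v)(w')`. -/
def quot2v (h : E → EReal) (x v : E) (τ : ℝ) (w' : E) : EReal :=
  (h (x + τ • w') - h x - ((τ * ⟪v, w'⟫ : ℝ) : EReal)) * (((2 / τ ^ 2) : ℝ) : EReal)

/-- The second subderivative `d²h(x|v)(w)`. -/
def subderiv2v (h : E → EReal) (x v w : E) : EReal :=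
  liminf (fun p : ℝ × E => quot2v h x v p.1 p.2) ((𝓝[>] (0 : ℝ)) ×ˢ 𝓝 w)

/-- The regular (Fréchet) subdifferential `∂̂h(x)`. -/
def rsubdiff (h : E → EReal) (x : E) : Set E :=
  {v | (0 : EReal) ≤ liminf (fun x' =>
      (h x' - h x - ((⟪v, x' - x⟫ : ℝ) : EReal)) * ((‖x' - x‖⁻¹ : ℝ) : EReal)) (𝓝[≠] x)}

/-- The limiting (Mordukhovich) subdifferential `∂h(x)`. -/
def lsubdiff (h : E → EReal) (x : E) : Set E :=
  {v | ∃ xs vs : ℕ → E, Tendsto xs atTop (𝓝 x) ∧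
    Tendsto (fun k => h (xs k)) atTop (𝓝 (h x)) ∧
    (∀ k, vs k ∈ rsubdiff h (xs k)) ∧ Tendsto vs atTop (𝓝 v)}

/-- The critical cone `C_h(x,v)`. -/
def ccone (h : E → EReal) (x v : E) : Set E :=
  {w | subderiv h x w = ((⟪v, w⟫ : ℝ) : EReal)}

/-- `h` is twice epi-differentiable at `x` for `v`. -/
def TwiceEpiDiffAt (h : E → EReal) (x v : E) : Prop :=
  ∀ w : E, ∀ τ : ℕ → ℝ, (∀ k, 0 < τ k) → Tendsto τ atTop (𝓝 (0 : ℝ)) →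
    ∃ ws : ℕ → E, Tendsto ws atTop (𝓝 w) ∧
      Tendsto (fun k => quot2v h x v (τ k) (ws k)) atTop (𝓝 (subderiv2v h x v w))

/-- `h` is properly twice epi-differentiable at `x` for `v`. -/
def ProperTwiceEpiDiffAt (h : E → EReal) (x v : E) : Prop :=
  TwiceEpiDiffAt h x v ∧ (∀ w, subderiv2v h x v w ≠ ⊥) ∧ ∃ w, subderiv2v h x v w ≠ ⊤

/-- `h` is parabolically regular at `x` for `v`. -/
def ParaRegularAt (h : E → EReal) (x v : E) : Prop :=
  ∀ w : E, subderiv h x w = ((⟪v, w⟫ : ℝ) : EReal) →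
    (⨅ z : E, (psubderiv h x w z - ((⟪v, z⟫ : ℝ) : EReal))) = subderiv2v h x v w

/-- The regular normal cone `N̂_S(u)`. -/
def rncone (S : Set E) (u : E) : Set E :=
  {v | limsup (fun u' => ((⟪v, u' - u⟫ / ‖u' - u‖ : ℝ) : EReal)) (𝓝[S \ {u}] u) ≤ 0}

/-- The limiting normal cone `N_S(u)`. -/
def lncone (S : Set E) (u : E) : Set E :=
  {v | ∃ us vs : ℕ → E, (∀ k, us k ∈ S) ∧ Tendsto us atTop (𝓝 u) ∧
    (∀ k, vs k ∈ rncone S (us k)) ∧ Tendsto vs atTop (𝓝 v)}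

/-- `S` is Clarke regular at `u`. -/
def ClarkeRegularAt (S : Set E) (u : E) : Prop := rncone S u = lncone S u

/-- The epigraph of `h`, as a subset of the `ℓ²`-product `E ×₂ ℝ`. -/
def epi (h : E → EReal) : Set (WithLp 2 (E × ℝ)) :=
  {p | h (WithLp.equiv 2 (E × ℝ) p).1 ≤ (((WithLp.equiv 2 (E × ℝ) p).2 : ℝ) : EReal)}

/-- `h` is (Clarke) regular at `y`: its epigraph is Clarke regular at `(y, h(y))`. -/
def FunRegularAt (h : E → EReal) (y : E) : Prop :=
  ClarkeRegularAt (epi h) ((WithLp.equiv 2 (E × ℝ)).symm (y, (h y).toReal))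

/-- The Fenchel conjugate of an extended-real-valued function. -/
def conj (g : E → EReal) (zs : E) : EReal := ⨆ z : E, (((⟪zs, z⟫ : ℝ) : EReal) - g z)

/-- The set `A_h(y,w)` of subgradients attaining the subderivative. -/
def Aset (h : E → EReal) (y w : E) : Set E :=
  {ξ | ξ ∈ lsubdiff h y ∧ ((⟪ξ, w⟫ : ℝ) : EReal) = subderiv h y w}

end InnerSpace

end Paper

/-! Write `x_τ(z) = x + τ w + τ²/2 z` and let `r_τ(z)` be the second-order difference quotient
of `g`, so that `g (x_τ(z)) = g x + τ dg(w) + τ²/2 r_τ(z)` with `r_τ(z') → g''(x; w, z)` as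
`τ ↓ 0, z' → z`. A parabolic curve `x_{τ_k}(z_k) ∈ g⁻¹(dom φ)` with `z_k → z` is therefore mapped
onto a parabolic curve in `dom φ` whose parameters `r_{τ_k}(z_k)` converge to `g''(x; w, z)`.
Conversely, metric subregularity bounds the distance of `x_τ(z)` to `g⁻¹(dom φ)` by `κ` times that
of `g (x_τ(z))` to `dom φ`, which is `o(τ²)` when `g''(x; w, z)` is second-order tangent; this works
along sequences and along `τ ↓ 0` alike, so inner tangency transfers as well. For nonemptiness the
same bound keeps `dist(x_τ(0), g⁻¹(dom φ)) / τ²` bounded, so the parameters of nearby points of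
`g⁻¹(dom φ)` have a convergent subsequence because `X` is finite-dimensional. -/

namespace Paper

section SecondOrderTangents

variable {X : Type*} [NormedAddCommGroup X] [NormedSpace ℝ X]

theorem dist_add_add_smul_sq (x w z z' : X) (τ : ℝ) :
    dist (x + τ • w + (τ ^ 2 / 2) • z) (x + τ • w + (τ ^ 2 / 2) • z') = τ ^ 2 / 2 * dist z z' := by
  rw [dist_add_left, dist_smul₀, Real.norm_of_nonneg (by positivity)]

theorem itcone2_subset_tcone2 (S : Set X) (x w : X) : itcone2 S x w ⊆ tcone2 S x w := by
  intro z hz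
  obtain ⟨τ, -, hpos, hτ⟩ := exists_seq_strictAnti_tendsto (0 : ℝ)
  exact ⟨τ, hpos, hτ, hz.comp (tendsto_nhdsWithin_iff.2 ⟨hτ, Eventually.of_forall hpos⟩)⟩

theorem mem_tcone2_of_tendsto {S : Set X} {x w z : X} {τ : ℕ → ℝ} {zs : ℕ → X}
    (hpos : ∀ k, 0 < τ k) (hτ : Tendsto τ atTop (𝓝 0)) (hzs : Tendsto zs atTop (𝓝 z))
    (hmem : ∀ k, x + τ k • w + (τ k ^ 2 / 2) • zs k ∈ S) :
    z ∈ tcone2 S x w := by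
  refine ⟨τ, hpos, hτ, squeeze_zero (fun k => div_nonneg infDist_nonneg (sq_nonneg _)) (fun k => ?_)
    (by simpa using ((tendsto_const_nhds (x := z)).dist hzs).div_const 2)⟩
  have hτk := (hpos k).ne'
  calc infDist (x + τ k • w + (τ k ^ 2 / 2) • z) S / τ k ^ 2
      ≤ τ k ^ 2 / 2 * dist z (zs k) / τ k ^ 2 := by
        rw [← dist_add_add_smul_sq]
        exact div_le_div_of_nonneg_right (infDist_le_dist_of_mem (hmem k)) (sq_nonneg _)
    _ = dist z (zs k) / 2 := by field_simp

theorem exists_mem_dist_lt {S : Set X} (hS : S.Nonempty) (x w z : X) {τ : ℝ} (hτ : 0 < τ) :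
    ∃ z', x + τ • w + (τ ^ 2 / 2) • z' ∈ S ∧
      dist z' z < 2 * (infDist (x + τ • w + (τ ^ 2 / 2) • z) S / τ ^ 2) + τ := by
  obtain ⟨s, hs, hdist⟩ := (infDist_lt_iff hS).1
    (lt_add_of_pos_right (infDist (x + τ • w + (τ ^ 2 / 2) • z) S) (by positivity : 0 < τ ^ 3 / 2))
  set z' := z + (2 / τ ^ 2) • (s - (x + τ • w + (τ ^ 2 / 2) • z))
  have hz' : x + τ • w + (τ ^ 2 / 2) • z' = s := by
    have hcancel : τ ^ 2 / 2 * (2 / τ ^ 2) = 1 := by field_simp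
    simp only [z', smul_add, smul_smul, hcancel, one_smul]
    abel
  refine ⟨z', hz' ▸ hs, ?_⟩
  have h := dist_add_add_smul_sq x w z' z τ
  rw [hz', dist_comm] at h
  rw [show dist z' z = 2 / τ ^ 2 * dist (x + τ • w + (τ ^ 2 / 2) • z) s by
    rw [h]; field_simp]
  calc 2 / τ ^ 2 * dist (x + τ • w + (τ ^ 2 / 2) • z) s
      < 2 / τ ^ 2 * (infDist (x + τ • w + (τ ^ 2 / 2) • z) S + τ ^ 3 / 2) := by gcongr
    _ = _ := by field_simp

theorem exists_tendsto_of_mem_tcone2 {S : Set X} (hS : S.Nonempty) {x w z : X}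
    (hz : z ∈ tcone2 S x w) :
    ∃ τ : ℕ → ℝ, (∀ k, 0 < τ k) ∧ Tendsto τ atTop (𝓝 0) ∧ ∃ zs : ℕ → X,
      Tendsto zs atTop (𝓝 z) ∧ ∀ k, x + τ k • w + (τ k ^ 2 / 2) • zs k ∈ S := by
  obtain ⟨τ, hpos, hτ, hdefect⟩ := hz
  choose zs hmem hdist using fun k => exists_mem_dist_lt hS x w z (hpos k)
  refine ⟨τ, hpos, hτ, zs, tendsto_iff_dist_tendsto_zero.2 ?_, hmem⟩
  exact squeeze_zero (fun k => dist_nonneg) (fun k => (hdist k).le)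
    (by simpa using (hdefect.const_mul 2).add hτ)

theorem tcone2_nonempty_of_frequently_le [ProperSpace X] {S : Set X} (hS : S.Nonempty)
    {x w z : X} {τ : ℕ → ℝ} (hpos : ∀ k, 0 < τ k) (hτ : Tendsto τ atTop (𝓝 0)) {M : ℝ}
    (hM : ∃ᶠ k in atTop, infDist (x + τ k • w + (τ k ^ 2 / 2) • z) S / τ k ^ 2 ≤ M) :
    (tcone2 S x w).Nonempty := by
  choose zs hmem hdist using fun k => exists_mem_dist_lt hS x w z (hpos k)
  have hbounded : ∃ᶠ k in atTop, zs k ∈ closedBall z (2 * M + 1) := by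
    refine (hM.and_eventually (hτ.eventually_lt_const one_pos)).mono fun k ⟨hk, hτk⟩ => ?_
    exact mem_closedBall.2 (by linarith [hdist k])
  obtain ⟨a, -, φ, hφ, hlim⟩ := tendsto_subseq_of_frequently_bounded isBounded_closedBall hbounded
  exact ⟨a, mem_tcone2_of_tendsto (fun k => hpos (φ k)) (hτ.comp hφ.tendsto_atTop) hlim
    fun k => hmem (φ k)⟩

end SecondOrderTangents

section Composition

variable {X : Type*} [NormedAddCommGroup X] [NormedSpace ℝ X]
variable {Y : Type*} [NormedAddCommGroup Y] [NormedSpace ℝ Y]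
variable {g : X → Y} {x w z : X} {d d2 : Y} {C : Set Y} {κ ε : ℝ}

/-- The difference quotient whose limit defines `HasParaSemideriv g x w d z d2`. -/
def paraQuot (g : X → Y) (x w : X) (d : Y) (τ : ℝ) (z : X) : Y :=
  (2 / τ ^ 2) • (g (x + τ • w + (τ ^ 2 / 2) • z) - g x - τ • d)

theorem add_add_smul_paraQuot {τ : ℝ} (hτ : τ ≠ 0) :
    g x + τ • d + (τ ^ 2 / 2) • paraQuot g x w d τ z = g (x + τ • w + (τ ^ 2 / 2) • z) := by
  have hcancel : τ ^ 2 / 2 * (2 / τ ^ 2) = 1 := by field_simp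
  rw [paraQuot, smul_smul, hcancel, one_smul]
  abel

theorem HasParaSemideriv.tendsto_paraQuot (hg : HasParaSemideriv g x w d z d2)
    {ι : Type*} {l : Filter ι} {τ : ι → ℝ} (hpos : ∀ᶠ i in l, 0 < τ i)
    (hτ : Tendsto τ l (𝓝 0)) {zs : ι → X} (hzs : Tendsto zs l (𝓝 z)) :
    Tendsto (fun i => paraQuot g x w d (τ i) (zs i)) l (𝓝 d2) :=
  Tendsto.comp (f := fun i => (τ i, zs i)) (g := fun p => paraQuot g x w d p.1 p.2) hg
    ((tendsto_nhdsWithin_of_tendsto_nhds_of_eventually_within τ hτ hpos).prodMk hzs)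

theorem HasParaSemideriv.mem_tcone2_of_mem_tcone2_preimage
    (hg : HasParaSemideriv g x w d z d2) {C : Set Y} (hS : (g ⁻¹' C).Nonempty)
    (hz : z ∈ tcone2 (g ⁻¹' C) x w) :
    d2 ∈ tcone2 C (g x) d := by
  obtain ⟨τ, hpos, hτ, zs, hzs, hmem⟩ := exists_tendsto_of_mem_tcone2 hS hz
  refine mem_tcone2_of_tendsto hpos hτ
    (hg.tendsto_paraQuot (Eventually.of_forall hpos) hτ hzs) fun k => ?_
  rw [add_add_smul_paraQuot (hpos k).ne']
  exact hmem k

theorem infDist_preimage_div_sq_le (hκ : 0 ≤ κ) {τ : ℝ} (hτ : τ ≠ 0)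
    (hreg : infDist (x + τ • w + (τ ^ 2 / 2) • z) (g ⁻¹' C)
      ≤ κ * infDist (g (x + τ • w + (τ ^ 2 / 2) • z)) C) (u : Y) :
    infDist (x + τ • w + (τ ^ 2 / 2) • z) (g ⁻¹' C) / τ ^ 2
      ≤ κ * (infDist (g x + τ • d + (τ ^ 2 / 2) • u) C / τ ^ 2
        + dist u (paraQuot g x w d τ z) / 2) := by
  have hnear : infDist (g (x + τ • w + (τ ^ 2 / 2) • z)) C
      ≤ infDist (g x + τ • d + (τ ^ 2 / 2) • u) C + τ ^ 2 / 2 * dist u (paraQuot g x w d τ z) := by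
    rw [← dist_add_add_smul_sq, add_add_smul_paraQuot hτ, dist_comm]
    exact infDist_le_infDist_add_dist
  calc infDist (x + τ • w + (τ ^ 2 / 2) • z) (g ⁻¹' C) / τ ^ 2
      ≤ κ * (infDist (g x + τ • d + (τ ^ 2 / 2) • u) C
          + τ ^ 2 / 2 * dist u (paraQuot g x w d τ z)) / τ ^ 2 := by
        gcongr
        exact hreg.trans (by gcongr)
    _ = _ := by field_simp

theorem eventually_infDist_preimage_div_sq_le (hκ : 0 ≤ κ) (hε : 0 < ε)
    (hsub : ∀ x', ‖x' - x‖ ≤ ε → infDist x' (g ⁻¹' C) ≤ κ * infDist (g x') C)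
    {ι : Type*} {l : Filter ι} {τ : ι → ℝ} (hpos : ∀ᶠ i in l, 0 < τ i)
    (hτ : Tendsto τ l (𝓝 0)) (u : Y) :
    ∀ᶠ i in l, infDist (x + τ i • w + (τ i ^ 2 / 2) • z) (g ⁻¹' C) / τ i ^ 2
      ≤ κ * (infDist (g x + τ i • d + (τ i ^ 2 / 2) • u) C / τ i ^ 2
        + dist u (paraQuot g x w d (τ i) z) / 2) := by
  have hcurve : Tendsto (fun i => x + τ i • w + (τ i ^ 2 / 2) • z) l (𝓝 x) := by
    simpa using (tendsto_const_nhds.add (hτ.smul_const w)).add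
      (((hτ.pow 2).div_const 2).smul_const z)
  have hnear : ∀ᶠ i in l, ‖x + τ i • w + (τ i ^ 2 / 2) • z - x‖ ≤ ε :=
    (tendsto_iff_norm_sub_tendsto_zero.1 hcurve).eventually (ge_mem_nhds hε)
  filter_upwards [hpos, hnear] with i hi hi'
  exact infDist_preimage_div_sq_le hκ hi.ne' (hsub _ hi') u

theorem HasParaSemideriv.tendsto_infDist_preimage_div_sq (hg : HasParaSemideriv g x w d z d2)
    (hκ : 0 ≤ κ) (hε : 0 < ε)
    (hsub : ∀ x', ‖x' - x‖ ≤ ε → infDist x' (g ⁻¹' C) ≤ κ * infDist (g x') C)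
    {ι : Type*} {l : Filter ι} {τ : ι → ℝ} (hpos : ∀ᶠ i in l, 0 < τ i)
    (hτ : Tendsto τ l (𝓝 0))
    (hd2 : Tendsto (fun i => infDist (g x + τ i • d + (τ i ^ 2 / 2) • d2) C / τ i ^ 2) l (𝓝 0)) :
    Tendsto (fun i => infDist (x + τ i • w + (τ i ^ 2 / 2) • z) (g ⁻¹' C) / τ i ^ 2) l (𝓝 0) := by
  have hbound := (hd2.add (((tendsto_const_nhds (x := d2)).dist
    (hg.tendsto_paraQuot hpos hτ tendsto_const_nhds)).div_const 2)).const_mul κ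
  rw [dist_self, zero_div, add_zero, mul_zero] at hbound
  exact squeeze_zero' (Eventually.of_forall fun i => div_nonneg infDist_nonneg (sq_nonneg _))
    (eventually_infDist_preimage_div_sq_le hκ hε hsub hpos hτ d2) hbound

theorem HasParaSemideriv.mem_tcone2_preimage (hg : HasParaSemideriv g x w d z d2)
    (hκ : 0 ≤ κ) (hε : 0 < ε)
    (hsub : ∀ x', ‖x' - x‖ ≤ ε → infDist x' (g ⁻¹' C) ≤ κ * infDist (g x') C)
    (hd2 : d2 ∈ tcone2 C (g x) d) :
    z ∈ tcone2 (g ⁻¹' C) x w :=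
  let ⟨τ, hpos, hτ, hdefect⟩ := hd2
  ⟨τ, hpos, hτ, hg.tendsto_infDist_preimage_div_sq hκ hε hsub (Eventually.of_forall hpos) hτ hdefect⟩

theorem HasParaSemideriv.mem_itcone2_preimage (hg : HasParaSemideriv g x w d z d2)
    (hκ : 0 ≤ κ) (hε : 0 < ε)
    (hsub : ∀ x', ‖x' - x‖ ≤ ε → infDist x' (g ⁻¹' C) ≤ κ * infDist (g x') C)
    (hd2 : d2 ∈ itcone2 C (g x) d) :
    z ∈ itcone2 (g ⁻¹' C) x w :=
  hg.tendsto_infDist_preimage_div_sq hκ hε hsub self_mem_nhdsWithin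
    (tendsto_id'.2 nhdsWithin_le_nhds) hd2

theorem HasParaSemideriv.tcone2_preimage_nonempty [ProperSpace X]
    (hg : HasParaSemideriv g x w d z d2) (hκ : 0 ≤ κ) (hε : 0 < ε)
    (hsub : ∀ x', ‖x' - x‖ ≤ ε → infDist x' (g ⁻¹' C) ≤ κ * infDist (g x') C)
    (hS : (g ⁻¹' C).Nonempty) {u : Y} (hu : u ∈ itcone2 C (g x) d) :
    (tcone2 (g ⁻¹' C) x w).Nonempty := by
  have hpos : ∀ᶠ t in 𝓝[>] (0 : ℝ), 0 < t := self_mem_nhdsWithin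
  have hτ : Tendsto id (𝓝[>] (0 : ℝ)) (𝓝 0) := tendsto_id'.2 nhdsWithin_le_nhds
  have hlim := (hu.add (((tendsto_const_nhds (x := u)).dist
    (hg.tendsto_paraQuot hpos hτ tendsto_const_nhds)).div_const 2)).const_mul κ
  rw [zero_add] at hlim
  have hbound : ∀ᶠ t in 𝓝[>] (0 : ℝ),
      infDist (x + t • w + (t ^ 2 / 2) • z) (g ⁻¹' C) / t ^ 2 ≤ κ * (dist u d2 / 2) + 1 := by
    filter_upwards [eventually_infDist_preimage_div_sq_le hκ hε hsub hpos hτ u,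
      hlim.eventually (gt_mem_nhds (lt_add_one _))] with t ht ht'
    exact ht.trans ht'.le
  obtain ⟨τ, -, hτpos, hτ0⟩ := exists_seq_strictAnti_tendsto (0 : ℝ)
  exact tcone2_nonempty_of_frequently_le hS hτpos hτ0
    (tendsto_nhdsWithin_iff.2 ⟨hτ0, Eventually.of_forall hτpos⟩ |>.eventually hbound).frequently

end Composition

theorem statement2_general
    {X : Type*} [NormedAddCommGroup X] [InnerProductSpace ℝ X] [FiniteDimensional ℝ X]
    {m : ℕ} (φ : EuclideanSpace ℝ (Fin m) → EReal)
    (g : X → EuclideanSpace ℝ (Fin m)) (xb : X) (hxb : φ (g xb) ≠ ⊤)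
    (dg : X → EuclideanSpace ℝ (Fin m)) (gpp : X → X → EuclideanSpace ℝ (Fin m))
    (hgpp : ∀ w z, HasParaSemideriv g xb w (dg w) z (gpp w z))
    (κ ε : ℝ) (hκ : 0 < κ) (hε : 0 < ε)
    (hsub : ∀ x : X, ‖x - xb‖ ≤ ε → infDist x (g ⁻¹' edom φ) ≤ κ * infDist (g x) (edom φ)) :
    ∀ w ∈ tcone (edom fun x => φ (g x)) xb,
      (∀ z : X, z ∈ tcone2 (edom fun x => φ (g x)) xb w ↔
        gpp w z ∈ tcone2 (edom φ) (g xb) (dg w)) ∧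
      (ParabolicallyDerivable (edom φ) (g xb) (dg w) →
        ParabolicallyDerivable (edom fun x => φ (g x)) xb w) := by
  have hS : (g ⁻¹' edom φ).Nonempty := ⟨xb, hxb⟩
  have hdom : (edom fun x => φ (g x)) = g ⁻¹' edom φ := rfl
  rw [hdom]
  intro w _
  refine ⟨fun z => ⟨(hgpp w z).mem_tcone2_of_mem_tcone2_preimage hS,
    (hgpp w z).mem_tcone2_preimage hκ.le hε hsub⟩, ?_⟩
  rintro ⟨hderiv, u, hu⟩
  refine ⟨(itcone2_subset_tcone2 _ _ _).antisymm fun z hz => ?_,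
    (hgpp w 0).tcone2_preimage_nonempty hκ.le hε hsub hS (by rwa [hderiv])⟩
  have hgz := (hgpp w z).mem_tcone2_of_mem_tcone2_preimage hS hz
  exact (hgpp w z).mem_itcone2_preimage hκ.le hε hsub (by rwa [hderiv])

/-- Proposition 2.1 (second-order tangent sets to the domain of `h = φ ∘ g`). -/
theorem statement2
    {X : Type*} [NormedAddCommGroup X] [InnerProductSpace ℝ X] [FiniteDimensional ℝ X]
    {m : ℕ} (φ : EuclideanSpace ℝ (Fin m) → EReal)
    (hproper : Proper φ) (hlsc : LowerSemicontinuous φ)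
    (g : X → EuclideanSpace ℝ (Fin m)) (xb : X) (hxb : φ (g xb) ≠ ⊤)
    (dg : X → EuclideanSpace ℝ (Fin m)) (gpp : X → X → EuclideanSpace ℝ (Fin m))
    (hdg : ∀ w, HasSemideriv g xb w (dg w))
    (hgpp : ∀ w z, HasParaSemideriv g xb w (dg w) z (gpp w z))
    (κ ε : ℝ) (hκ : 0 < κ) (hε : 0 < ε)
    (hsub : ∀ x : X, ‖x - xb‖ ≤ ε → infDist x (g ⁻¹' edom φ) ≤ κ * infDist (g x) (edom φ)) :
    ∀ w ∈ tcone (edom fun x => φ (g x)) xb,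
      (∀ z : X, z ∈ tcone2 (edom fun x => φ (g x)) xb w ↔
        gpp w z ∈ tcone2 (edom φ) (g xb) (dg w)) ∧
      (ParabolicallyDerivable (edom φ) (g xb) (dg w) →
        ParabolicallyDerivable (edom fun x => φ (g x)) xb w) :=
  statement2_general φ g xb hxb dg gpp hgpp κ ε hκ hε hsub

end Paper
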